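/- If M is a semigroup of isometries on ℓ²(ℕ) containing all powers of the unilateral shift S and commuting with S, and if the involutive semigroup generated by M ∪ M* is an inverse semigroup, then for every T ∈ M the operator T* Sᵏ is a partial isometry for all k. -/

import Mathlib

noncomputable section

open ContinuousLinearMap
open scoped ENNReal

/-- The Hilbert space ℓ²(ℕ, ℂ). -/
abbrev H2 : Type := lp (fun _ : ℕ => ℂ) 2

namespace ShiftDef

/-- The shifted sequence: `(a₀, a₁, …) ↦ (0, a₀, a₁, …)`. -/
def shiftFun (f : ℕ → ℂ) : ℕ → ℂ
  | 0 => 0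
  | n + 1 => f n

lemma memℓp_shift (f : H2) : Memℓp (shiftFun f) 2 := by
  apply memℓp_gen
  have hs : Summable fun n : ℕ => ‖(f : ∀ _ : ℕ, ℂ) n‖ ^ (2 : ℝ≥0∞).toReal :=
    (lp.memℓp f).summable (by norm_num)
  refine (summable_nat_add_iff 1).mp ?_
  simpa [shiftFun] using hs

lemma tsum_shift (f : H2) :
    (∑' n, ‖shiftFun f n‖ ^ (2 : ℝ≥0∞).toReal)
      = ∑' n, ‖(f : ∀ _ : ℕ, ℂ) n‖ ^ (2 : ℝ≥0∞).toReal := by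
  have hsum : Summable fun n : ℕ => ‖shiftFun (f : ∀ _ : ℕ, ℂ) n‖ ^ (2 : ℝ≥0∞).toReal :=
    (memℓp_gen_iff (by norm_num)).mp (memℓp_shift f)
  rw [hsum.tsum_eq_zero_add]
  simp [shiftFun]

/-- The shift as a linear map on ℓ². -/
def shiftLM : H2 →ₗ[ℂ] H2 where
  toFun f := ⟨shiftFun f, memℓp_shift f⟩
  map_add' f g := by
    ext n
    cases n <;> simp [shiftFun, lp.coeFn_add] <;> erw [Pi.add_apply] <;> simp [shiftFun]
  map_smul' c f := by
    ext n
    cases n <;> simp [shiftFun, lp.coeFn_smul]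

lemma norm_shiftLM (f : H2) : ‖shiftLM f‖ = ‖f‖ := by
  rw [lp.norm_eq_tsum_rpow (by norm_num) (shiftLM f),
    lp.norm_eq_tsum_rpow (by norm_num : (0:ℝ) < (2 : ℝ≥0∞).toReal) f]
  congr 1
  exact tsum_shift f

end ShiftDef

/-- The unilateral shift operator `S` on ℓ²(ℕ): `(S f)(0) = 0`, `(S f)(n+1) = f n`. -/
def Sh : H2 →L[ℂ] H2 :=
  ShiftDef.shiftLM.mkContinuous 1 fun f => by
    rw [ShiftDef.norm_shiftLM, one_mul]

@[simp] lemma Sh_apply_zero (f : H2) : (Sh f : ∀ _ : ℕ, ℂ) 0 = 0 := rfl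
@[simp] lemma Sh_apply_succ (f : H2) (n : ℕ) :
    (Sh f : ∀ _ : ℕ, ℂ) (n + 1) = (f : ∀ _ : ℕ, ℂ) n := rfl


section AuxInverse

variable {α : Type*} [Semigroup α]

/-- In an inverse semigroup, the product of two idempotents is idempotent. -/
lemma aux_idem_mul (C : Subsemigroup α)
    (hinv : ∀ x ∈ C, ∃! y, y ∈ C ∧ x * y * x = x ∧ y * x * y = y)
    {e f : α} (he : e ∈ C) (hf : f ∈ C) (hee : e * e = e) (hff : f * f = f) :
    (e * f) * (e * f) = e * f := by
  have hee' : ∀ x : α, e * (e * x) = e * x := fun x => by rw [← mul_assoc, hee]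
  have hff' : ∀ x : α, f * (f * x) = f * x := fun x => by rw [← mul_assoc, hff]
  obtain ⟨y, ⟨hyC, hxyx, hyxy⟩, huniq⟩ := hinv (e * f) (mul_mem he hf)
  have hxyx' : e * (f * (y * (e * f))) = e * f := by
    simpa [mul_assoc] using hxyx
  have hyxy'' : ∀ x : α, y * (e * (f * (y * x))) = y * x := fun x => by
    conv_rhs => rw [← hyxy]
    simp [mul_assoc]
  have hyeC : f * y * e ∈ C := mul_mem (mul_mem hf hyC) he
  have hy_eq : f * y * e = y := by
    refine huniq _ ⟨hyeC, ?_, ?_⟩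
    · simp only [mul_assoc, hff', hee', hxyx']
    · simp only [mul_assoc, hee', hff', hyxy'']
  have hyy : y * y = y := by
    conv_lhs => rw [← hy_eq]
    simp only [mul_assoc, hyxy'']
    rw [← mul_assoc, hy_eq]
  -- both `e*f` and `y` are inverses of `y`, hence `e*f = y`
  obtain ⟨z, _, huniq2⟩ := hinv y hyC
  have h1 : e * f = z := huniq2 _ ⟨mul_mem he hf, hyxy, hxyx⟩
  have h2 : y = z := huniq2 _ ⟨hyC, by rw [hyy, hyy], by rw [hyy, hyy]⟩
  rw [h1, ← h2, hyy]

/-- In an inverse semigroup, idempotents commute. -/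
lemma aux_idem_comm (C : Subsemigroup α)
    (hinv : ∀ x ∈ C, ∃! y, y ∈ C ∧ x * y * x = x ∧ y * x * y = y)
    {e f : α} (he : e ∈ C) (hf : f ∈ C) (hee : e * e = e) (hff : f * f = f) :
    e * f = f * e := by
  have hee' : ∀ x : α, e * (e * x) = e * x := fun x => by rw [← mul_assoc, hee]
  have hff' : ∀ x : α, f * (f * x) = f * x := fun x => by rw [← mul_assoc, hff]
  have hef : (e * f) * (e * f) = e * f := aux_idem_mul C hinv he hf hee hff
  have hfe : (f * e) * (f * e) = f * e := aux_idem_mul C hinv hf he hff hee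
  have hef' : e * (f * (e * f)) = e * f := by simpa [mul_assoc] using hef
  have hfe' : f * (e * (f * e)) = f * e := by simpa [mul_assoc] using hfe
  obtain ⟨z, _, huniq⟩ := hinv (e * f) (mul_mem he hf)
  have h1 : e * f = z := huniq _ ⟨mul_mem he hf, by rw [hef, hef], by rw [hef, hef]⟩
  have h2 : f * e = z := by
    refine huniq _ ⟨mul_mem hf he, ?_, ?_⟩
    · simp only [mul_assoc, hff', hee', hef']
    · simp only [mul_assoc, hee', hff', hfe']
  rw [h1, h2]

end AuxInverse

open scoped InnerProductSpace in
/-- An isometric continuous linear map on ℓ² satisfies `A* A = 1`. -/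
lemma aux_isometry_star_mul (A : H2 →L[ℂ] H2) (hA : Isometry (⇑A)) :
    star A * A = 1 := by
  have hn : ∀ x : H2, ‖A x‖ = ‖x‖ := (AddMonoidHomClass.isometry_iff_norm A).mp hA
  let li : H2 →ₗᵢ[ℂ] H2 := ⟨A.toLinearMap, hn⟩
  have hi : ∀ x y : H2, ⟪A x, A y⟫_ℂ = ⟪x, y⟫_ℂ := fun x y => li.inner_map_map x y
  refine ContinuousLinearMap.ext fun x => ?_
  refine ext_inner_right ℂ fun y => ?_
  simp only [ContinuousLinearMap.mul_apply, ContinuousLinearMap.one_apply,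
    ContinuousLinearMap.star_eq_adjoint, ContinuousLinearMap.adjoint_inner_left, hi]

/-- if `M` is a semigroup of isometries containing all powers of
`S` and commuting with `S`, and the involutive semigroup generated by `M ∪ M*`
is inverse, then `T* Sᵏ` is a partial isometry for every `T ∈ M` and every `k`. -/
theorem pi_extension_inverse_partial_isometry
    (M : Subsemigroup (H2 →L[ℂ] H2))
    (hiso : ∀ T ∈ M, Isometry (⇑T))
    (hpow : ∀ n : ℕ, Sh ^ n ∈ M)
    (hcomm : ∀ T ∈ M, T * Sh = Sh * T)
    (hinv : ∀ x ∈ Subsemigroup.closure ((M : Set (H2 →L[ℂ] H2)) ∪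
        (star '' (M : Set (H2 →L[ℂ] H2)))),
      ∃! y, y ∈ Subsemigroup.closure ((M : Set (H2 →L[ℂ] H2)) ∪
        (star '' (M : Set (H2 →L[ℂ] H2)))) ∧ x * y * x = x ∧ y * x * y = y)
    (T : H2 →L[ℂ] H2) (hT : T ∈ M) (k : ℕ) :
    (star T * Sh ^ k) * star (star T * Sh ^ k) * (star T * Sh ^ k) =
      star T * Sh ^ k := by
  set C := Subsemigroup.closure ((M : Set (H2 →L[ℂ] H2)) ∪
      (star '' (M : Set (H2 →L[ℂ] H2)))) with hC
  have hTC : T ∈ C := Subsemigroup.subset_closure (Or.inl hT)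
  have hTsC : star T ∈ C := Subsemigroup.subset_closure (Or.inr ⟨T, hT, rfl⟩)
  have hSkC : (Sh ^ k) ∈ C := Subsemigroup.subset_closure (Or.inl (hpow k))
  have hSksC : star (Sh ^ k) ∈ C := Subsemigroup.subset_closure (Or.inr ⟨_, hpow k, rfl⟩)
  have hT1 : star T * T = 1 := aux_isometry_star_mul T (hiso T hT)
  have hS1 : star (Sh ^ k) * Sh ^ k = 1 := aux_isometry_star_mul _ (hiso _ (hpow k))
  -- the two idempotents
  have hE : (T * star T) * (T * star T) = T * star T := by
    rw [mul_assoc, ← mul_assoc (star T), hT1, one_mul]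
  have hF : (Sh ^ k * star (Sh ^ k)) * (Sh ^ k * star (Sh ^ k)) = Sh ^ k * star (Sh ^ k) := by
    rw [mul_assoc, ← mul_assoc (star (Sh ^ k)), hS1, one_mul]
  have hcommFE : (Sh ^ k * star (Sh ^ k)) * (T * star T)
      = (T * star T) * (Sh ^ k * star (Sh ^ k)) :=
    aux_idem_comm C hinv (mul_mem hSkC hSksC) (mul_mem hTC hTsC) hF hE
  have key : ∀ x : H2 →L[ℂ] H2,
      Sh ^ k * (star (Sh ^ k) * (T * (star T * x)))
        = T * (star T * (Sh ^ k * (star (Sh ^ k) * x))) := fun x => by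
    have := congrArg (· * x) hcommFE
    simpa [mul_assoc] using this
  have hT1' : ∀ x : H2 →L[ℂ] H2, star T * (T * x) = x := fun x => by
    rw [← mul_assoc, hT1, one_mul]
  simp only [star_mul, star_star, mul_assoc, key, hS1, mul_one, hT1']

end
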